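/- arXiv:2410.23911 — 4 statements merged into one kernel-verified Lean document; each statement's English description precedes it below -/
import Mathlib

section
/- Every numerical semigroup H satisfies the inequality 2·g(H) ≥ F(H) + t(H). -/
/-- A numerical semigroup: a subset of `ℕ` containing `0`, closed under addition,
with finite complement. -/
def IsNumericalSemigroup (H : Set ℕ) : Prop :=
  0 ∈ H ∧ (∀ a ∈ H, ∀ b ∈ H, a + b ∈ H) ∧ (Hᶜ).Finite

/-- The copy of `H` inside `ℤ`. -/
def NS.Z (H : Set ℕ) : Set ℤ := (fun n : ℕ => (n : ℤ)) '' H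

/-- The genus `g(H)`: the number of gaps of `H`. -/
noncomputable def NS.gaps (H : Set ℕ) : ℕ := (Hᶜ).ncard

/-- The Frobenius number `F(H) = max {n ∈ ℤ | n ∉ H}`. -/
noncomputable def NS.frob (H : Set ℕ) : ℤ := sSup ((NS.Z H)ᶜ)

/-- The type `t(H) = #{n ∈ ℤ \ H | n + h ∈ H for all h ∈ H with h > 0}`. -/
noncomputable def NS.typ (H : Set ℕ) : ℕ :=
  {n : ℤ | n ∉ NS.Z H ∧ ∀ h ∈ H, 0 < h → n + (h : ℤ) ∈ NS.Z H}.ncard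

/-- The numerical semigroup generated by `3, 4, 5`. -/
def H345 : Set ℕ := {n : ℕ | ∃ a b c : ℕ, n = 3 * a + 4 * b + 5 * c}

/-!
The reflection `n ↦ F - n` sends the `F + 1 - g` elements of `H` in `[0, F]` injectively to gaps
(if `F - h` were in `H`, so would be `F`). The pseudo-Frobenius numbers other than `F` are gaps
outside this image, since `f + (F - f) = F ∉ H`. Hence `(F + 1 - g) + (t - 1) ≤ g`.
Working in `ℤ` makes `H = ℕ` (where `F = -1` and `t = 1`) no special case.
-/

open Set

namespace NS

def pseudoFrobenius (S : Set ℤ) : Set ℤ :=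
  {n | n ∉ S ∧ ∀ s ∈ S, 0 < s → n + s ∈ S}

section Reflection

variable {S : Set ℤ} {F : ℤ}

lemma mem_pseudoFrobenius_of_forall_lt (hF : F ∉ S) (hgt : ∀ z, F < z → z ∈ S) :
    F ∈ pseudoFrobenius S :=
  ⟨hF, fun _ _ hs => hgt _ (by omega)⟩

lemma mapsTo_sub_inter_Icc (hadd : ∀ a ∈ S, ∀ b ∈ S, a + b ∈ S) (hF : F ∉ S) :
    MapsTo (F - ·) (S ∩ Icc 0 F) (Icc 0 F \ S) := by
  rintro s ⟨hs, hs0, hsF⟩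
  show F - s ∈ _
  refine ⟨⟨by omega, by omega⟩, fun h => hF ?_⟩
  simpa using hadd _ h _ hs

lemma pseudoFrobenius_sdiff_subset (hF : F ∉ S) (hgt : ∀ z, F < z → z ∈ S) :
    pseudoFrobenius S \ {F} ⊆ (Icc 0 F \ S) \ (F - ·) '' (S ∩ Icc 0 F) := by
  rintro n ⟨⟨hn, hnS⟩, hne⟩
  have hnF : n < F := lt_of_le_of_ne (not_lt.1 fun h => hn (hgt n h)) hne
  -- `F - n` is a positive shift taking `n` to `F ∉ S`, so it cannot lie in `S`.
  have hsub : F - n ∉ S := fun h => hF (by simpa using hnS _ h (by omega))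
  have hn0 : 0 ≤ n := not_lt.1 fun h => hsub (hgt _ (by omega))
  refine ⟨⟨⟨hn0, hnF.le⟩, hn⟩, ?_⟩
  rintro ⟨s, ⟨hs, -⟩, hsn⟩
  exact hsub (by rwa [← hsn, sub_sub_cancel])

theorem frob_add_ncard_pseudoFrobenius_le (hadd : ∀ a ∈ S, ∀ b ∈ S, a + b ∈ S)
    (hF : F ∉ S) (hgt : ∀ z, F < z → z ∈ S) :
    F + (pseudoFrobenius S).ncard ≤ 2 * (Icc 0 F \ S).ncard := by
  set D := Icc 0 F \ S
  set A := (F - ·) '' (S ∩ Icc 0 F)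
  have hAD : A ⊆ D := (mapsTo_sub_inter_Icc hadd hF).image_subset
  have hD : D.Finite := (finite_Icc 0 F).sdiff
  have hP : (pseudoFrobenius S \ {F}).ncard + 1 = (pseudoFrobenius S).ncard :=
    ncard_sdiff_singleton_add_one (mem_pseudoFrobenius_of_forall_lt hF hgt)
      ((hD.sdiff.subset (pseudoFrobenius_sdiff_subset hF hgt)).of_sdiff (finite_singleton F))
  have hPA : (pseudoFrobenius S \ {F}).ncard ≤ D.ncard - A.ncard := by
    rw [← ncard_sdiff hAD (hD.subset hAD)]
    exact ncard_le_ncard (pseudoFrobenius_sdiff_subset hF hgt) hD.sdiff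
  have hA : A.ncard = (S ∩ Icc 0 F).ncard :=
    ncard_image_of_injective _ sub_right_injective
  have hIcc : (S ∩ Icc 0 F).ncard + D.ncard = (F + 1).toNat := by
    rw [inter_comm, ncard_inter_add_ncard_sdiff_eq_ncard _ _ (finite_Icc 0 F)]
    simpa [← ncard_coe_finset] using Int.card_Icc 0 F
  have hAD' : A.ncard ≤ D.ncard := ncard_le_ncard hAD hD
  omega

end Reflection

section Semigroup

variable {H : Set ℕ}

lemma mem_Z {z : ℤ} : z ∈ NS.Z H ↔ 0 ≤ z ∧ z.toNat ∈ H := by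
  constructor
  · rintro ⟨m, hm, rfl⟩
    simpa using hm
  · rintro ⟨h0, hm⟩
    exact ⟨z.toNat, hm, Int.toNat_of_nonneg h0⟩

@[simp]
lemma natCast_mem_Z {n : ℕ} : (n : ℤ) ∈ NS.Z H ↔ n ∈ H := by
  simp [mem_Z]

lemma add_mem_Z (hadd : ∀ a ∈ H, ∀ b ∈ H, a + b ∈ H) :
    ∀ a ∈ NS.Z H, ∀ b ∈ NS.Z H, a + b ∈ NS.Z H := by
  rintro _ ⟨a, ha, rfl⟩ _ ⟨b, hb, rfl⟩
  exact_mod_cast natCast_mem_Z.2 (hadd a ha b hb)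

lemma bddAbove_compl_Z (hfin : (Hᶜ).Finite) : BddAbove (NS.Z H)ᶜ := by
  obtain ⟨N, hN⟩ := hfin.bddAbove
  refine ⟨N, fun z hz => ?_⟩
  by_contra! hlt
  exact hz (mem_Z.2 ⟨by omega, not_not.1 fun h => absurd (hN h) (by omega)⟩)

lemma frob_notMem_Z (hfin : (Hᶜ).Finite) : NS.frob H ∉ NS.Z H :=
  Int.csSup_mem ⟨-1, fun h => by simpa using (mem_Z.1 h).1⟩ (bddAbove_compl_Z hfin)

lemma mem_Z_of_frob_lt (hfin : (Hᶜ).Finite) {z : ℤ} (hz : NS.frob H < z) : z ∈ NS.Z H :=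
  not_not.1 fun h => (le_csSup (bddAbove_compl_Z hfin) h).not_gt hz

lemma typ_eq_ncard_pseudoFrobenius : NS.typ H = (pseudoFrobenius (NS.Z H)).ncard := by
  simp [NS.typ, pseudoFrobenius, NS.Z]

lemma gaps_eq_ncard_Icc_sdiff (hfin : (Hᶜ).Finite) :
    NS.gaps H = (Icc 0 (NS.frob H) \ NS.Z H).ncard := by
  have himage : (fun n : ℕ => (n : ℤ)) '' Hᶜ = Icc 0 (NS.frob H) \ NS.Z H := by
    ext z
    constructor
    · rintro ⟨n, hn, rfl⟩
      refine ⟨⟨n.cast_nonneg, not_lt.1 fun h => hn ?_⟩, fun h => hn (natCast_mem_Z.1 h)⟩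
      exact natCast_mem_Z.1 (mem_Z_of_frob_lt hfin h)
    · rintro ⟨⟨hz0, -⟩, hz⟩
      exact ⟨z.toNat, fun h => hz (mem_Z.2 ⟨hz0, h⟩), Int.toNat_of_nonneg hz0⟩
  rw [NS.gaps, ← himage, ncard_image_of_injective _ Nat.cast_injective]

end Semigroup

end NS

/-- Every numerical semigroup `H` satisfies `2·g(H) ≥ F(H) + t(H)`. -/
theorem stmt_2 (H : Set ℕ) (hH : IsNumericalSemigroup H) :
    NS.frob H + (NS.typ H : ℤ) ≤ 2 * NS.gaps H := by
  obtain ⟨-, hadd, hfin⟩ := hH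
  rw [NS.typ_eq_ncard_pseudoFrobenius, NS.gaps_eq_ncard_Icc_sdiff hfin]
  exact NS.frob_add_ncard_pseudoFrobenius_le (NS.add_mem_Z hadd) (NS.frob_notMem_Z hfin)
    fun _ => NS.mem_Z_of_frob_lt hfin
end

section
/- Let S = ⊕_{n≥0} S_n be a commutative graded ring with S_0 a field k, and let M be a finitely generated Cohen–Macaulay graded S-module of Krull dimension 1. Suppose x ∈ S_b is an M-regular element and S_i = 0 for all 0 < i < b. Then the multiplicity of M with respect to the irrelevant maximal ideal equals dim_k M/xM, i.e., e_0(M) = dim_k(M/xM). -/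
/-!
Write `mS` for the irrelevant ideal and `e = dim M/xM`. Since `x ∈ mS`, the module `M/mSⁿM` is a
quotient of `M/xⁿM`, whose length is `n e` because `x` is `M`-regular. Conversely, the gap
`Sᵢ = 0` for `0 < i < b` makes `mS` raise degrees by at least `b`, so `mSⁿM` is generated in
degrees `≥ d + n b`, where `d` bounds the degrees of generators of `M` from below. As `M/xM` is
finite-dimensional and `xM` is homogeneous, `M_j ⊆ xM` for `j ≫ 0`, and peeling off one factor
of `x` at a time gives `mSⁿM ⊆ x^(n-c)M` for a constant `c`. Hence
`(n - c) e ≤ dim M/mSⁿM ≤ n e`.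
-/

open Filter Module DirectSum

section SMulRegular

variable {R M : Type*} [CommRing R] [AddCommGroup M] [Module R M] {x : R}

theorem Submodule.mem_span_singleton_smul_top {m : M} :
    m ∈ Ideal.span {x} • (⊤ : Submodule R M) ↔ ∃ m', x • m' = m := by
  simp [Submodule.ideal_span_singleton_smul, Submodule.mem_smul_pointwise_iff_exists]

theorem Submodule.mem_span_singleton_pow_smul_top {n : ℕ} {m : M} :
    m ∈ Ideal.span {x} ^ n • (⊤ : Submodule R M) ↔ ∃ m', x ^ n • m' = m := by
  rw [Ideal.span_singleton_pow, Submodule.mem_span_singleton_smul_top]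

theorem Submodule.length_quotient_le_of_le (A : Type*) [Ring A] [Module A M] [SMul A R]
    [IsScalarTower A R M] {p q : Submodule R M} (h : p ≤ q) :
    length A (M ⧸ q) ≤ length A (M ⧸ p) :=
  length_le_of_surjective ((Submodule.factor h).restrictScalars A) (Submodule.factor_surjective h)

/-- Induction on `n` along `0 → M/xⁿM --x--> M/xⁿ⁺¹M → M/xM → 0`, exact since `x` is regular. -/
theorem IsSMulRegular.length_quotient_span_singleton_pow_smul_top (A : Type*) [Ring A]
    [Module A M] [SMul A R] [IsScalarTower A R M] (hx : IsSMulRegular M x) (n : ℕ) :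
    length A (M ⧸ Ideal.span {x} ^ n • (⊤ : Submodule R M)) =
      n * length A (M ⧸ Ideal.span {x} • (⊤ : Submodule R M)) := by
  induction n with
  | zero =>
    have : Subsingleton (M ⧸ Ideal.span {x} ^ 0 • (⊤ : Submodule R M)) := by
      rw [pow_zero, Ideal.one_eq_top, Submodule.top_smul]
      infer_instance
    simp
  | succ n ih =>
    have hmul : Ideal.span {x} ^ n • ⊤ ≤
        (Ideal.span {x} ^ (n + 1) • (⊤ : Submodule R M)).comap (LinearMap.lsmul R M x) := by
      intro m hm
      obtain ⟨m', rfl⟩ := Submodule.mem_span_singleton_pow_smul_top.mp hm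
      exact Submodule.mem_span_singleton_pow_smul_top.mpr ⟨m', by rw [pow_succ', mul_smul]; rfl⟩
    have hle : Ideal.span {x} ^ (n + 1) • ⊤ ≤ Ideal.span {x} • (⊤ : Submodule R M) :=
      Submodule.smul_mono_left (Ideal.pow_le_self n.succ_ne_zero)
    let f := Submodule.mapQ _ _ (LinearMap.lsmul R M x) hmul
    let g := Submodule.factor hle
    have hf : Function.Injective f := by
      rw [← LinearMap.ker_eq_bot, Submodule.eq_bot_iff]
      intro z hz
      obtain ⟨m, rfl⟩ := Submodule.Quotient.mk_surjective _ z
      simp only [LinearMap.mem_ker, f, Submodule.mapQ_apply, LinearMap.lsmul_apply,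
        Submodule.Quotient.mk_eq_zero, Submodule.mem_span_singleton_pow_smul_top] at hz ⊢
      obtain ⟨m', hm'⟩ := hz
      exact ⟨m', hx (show x • x ^ n • m' = x • m by rw [← hm', pow_succ', mul_smul])⟩
    have hfg : Function.Exact f g := by
      intro z
      obtain ⟨m, rfl⟩ := Submodule.Quotient.mk_surjective _ z
      simp only [g, Submodule.factor, Submodule.mapQ_apply, LinearMap.id_apply,
        Submodule.Quotient.mk_eq_zero, Submodule.mem_span_singleton_smul_top]
      constructor
      · rintro ⟨m', rfl⟩
        exact ⟨Submodule.Quotient.mk m', rfl⟩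
      · rintro ⟨z, hz⟩
        obtain ⟨m', rfl⟩ := Submodule.Quotient.mk_surjective _ z
        have hdiff : x • m' - m ∈ Ideal.span {x} • (⊤ : Submodule R M) :=
          hle ((Submodule.Quotient.eq _).mp hz)
        obtain ⟨m'', hm''⟩ := Submodule.mem_span_singleton_smul_top.mp hdiff
        exact ⟨m' - m'', by rw [smul_sub, hm'', sub_sub_cancel]⟩
    rw [length_eq_add_of_exact (f.restrictScalars A) (g.restrictScalars A) hf
      (Submodule.factor_surjective hle) hfg, ih]
    push_cast
    ring

end SMulRegular

theorem Module.finrank_eq_toNat_length (K V : Type*) [DivisionRing K] [AddCommGroup V]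
    [Module K V] : finrank K V = (length K V).toNat := by
  rw [length_eq_rank]
  rfl

theorem tendsto_div_of_sub_mul_le_of_le_mul {a : ℕ → ℕ} {c e : ℕ}
    (hlow : ∀ n, (n - c) * e ≤ a n) (hup : ∀ n, a n ≤ n * e) :
    Tendsto (fun n ↦ (a n : ℝ) / n) atTop (nhds e) := by
  have hlim : Tendsto (fun n : ℕ ↦ (e : ℝ) - c * e / n) atTop (nhds e) := by
    simpa using tendsto_const_nhds.sub (tendsto_const_div_atTop_nhds_zero_nat ((c : ℝ) * e))
  refine tendsto_of_tendsto_of_tendsto_of_le_of_le' hlim tendsto_const_nhds ?_ ?_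
  · filter_upwards [eventually_gt_atTop c] with n hn
    have hn₀ : (0 : ℝ) < n := by exact_mod_cast (Nat.zero_le c).trans_lt hn
    have h := hlow n
    rw [sub_div' hn₀.ne', div_le_div_iff_of_pos_right hn₀]
    rw [← Nat.cast_le (α := ℝ), Nat.cast_mul, Nat.cast_sub hn.le] at h
    linarith
  · filter_upwards [eventually_gt_atTop 0] with n hn
    rw [div_le_iff₀ (by exact_mod_cast hn)]
    exact_mod_cast (hup n).trans_eq (mul_comm _ _)

section GradedModule

variable {k S M : Type*} [Ring k] [CommRing S] [AddCommGroup M] [Module S M] [Module k M]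

variable (S) in
def spanOfDegreeGE (ℳ : ℤ → Submodule k M) (e : ℤ) : Submodule S M :=
  Submodule.span S {m | ∃ j, e ≤ j ∧ m ∈ ℳ j}

theorem exists_spanOfDegreeGE_eq_top {ℳ : ℤ → Submodule k M} [Decomposition ℳ]
    [Module.Finite S M] : ∃ d, spanOfDegreeGE S ℳ d = ⊤ := by
  classical
  obtain ⟨G, hG⟩ := Module.Finite.fg_top (R := S) (M := M)
  obtain ⟨d, hd⟩ := (G.biUnion fun g ↦ (decompose ℳ g).support).bddBelow
  refine ⟨d, eq_top_iff.mpr ?_⟩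
  rw [← hG, Submodule.span_le]
  intro g hg
  rw [← sum_support_decompose ℳ g]
  exact sum_mem fun j hj ↦ Submodule.subset_span
    ⟨j, hd (Finset.mem_biUnion.mpr ⟨g, hg, hj⟩), SetLike.coe_mem _⟩

theorem Submodule.IsHomogeneous.iSupIndep_map_mkQ {ι : Type*} [DecidableEq ι] [SMul k S]
    [IsScalarTower k S M] {ℳ : ι → Submodule k M} [Decomposition ℳ] {p : Submodule S M}
    (hp : p.IsHomogeneous ℳ) : iSupIndep fun i ↦ (ℳ i).map (p.mkQ.restrictScalars k) := by
  rw [iSupIndep_iff_finsetSum_eq_zero_imp_eq_zero]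
  intro s v hv hsum i hi
  simp only [Submodule.mem_map] at hv
  choose! m hm hmv using hv
  have hsum_mem : ∑ j ∈ s, m j ∈ p := by
    rw [← Submodule.Quotient.mk_eq_zero, ← Submodule.mkQ_apply, map_sum, ← hsum]
    exact Finset.sum_congr rfl hmv
  have hcomp : (decompose ℳ (∑ j ∈ s, m j) i : M) = m i := by
    rw [decompose_sum, DFinsupp.finsetSum_apply, AddSubmonoidClass.coe_finsetSum,
      Finset.sum_eq_single_of_mem i hi]
    · exact decompose_of_mem_same ℳ (hm i hi)
    · exact fun j hj hji ↦ decompose_of_mem_ne ℳ (hm j hj) hji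
  rw [← hmv i hi, LinearMap.restrictScalars_apply, Submodule.mkQ_apply,
    Submodule.Quotient.mk_eq_zero, ← hcomp]
  exact hp i hsum_mem

variable [Module k S]

variable (𝒜 : ℕ → Submodule k S) in
def irrelevantIdeal : Ideal S :=
  Ideal.span {s | ∃ i : ℕ, 0 < i ∧ s ∈ 𝒜 i}

variable {𝒜 : ℕ → Submodule k S} {ℳ : ℤ → Submodule k M}
  (hsmul : ∀ (i : ℕ) (j : ℤ) (s : S) (m : M), s ∈ 𝒜 i → m ∈ ℳ j → s • m ∈ ℳ (i + j))
include hsmul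

theorem decompose_smul_of_mem [Decomposition ℳ] {i : ℕ} {s : S} (hs : s ∈ 𝒜 i) (m : M)
    (j : ℤ) : (decompose ℳ (s • m) j : M) = s • (decompose ℳ m (j - i) : M) := by
  induction m using DirectSum.Decomposition.inductionOn ℳ with
  | zero => simp
  | @homogeneous j' m =>
    have hsm := hsmul i j' s m hs m.2
    by_cases hj : j = i + j'
    · rw [hj, decompose_of_mem_same ℳ hsm, add_sub_cancel_left, decompose_of_mem_same ℳ m.2]
    · rw [decompose_of_mem_ne ℳ hsm (Ne.symm hj), decompose_of_mem_ne ℳ m.2 (by omega), smul_zero]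
  | add m m' h h' => simp [smul_add, decompose_add, h, h']

theorem isHomogeneous_span_singleton_smul_top [Decomposition ℳ] {b : ℕ} {x : S}
    (hx : x ∈ 𝒜 b) : (Ideal.span {x} • (⊤ : Submodule S M)).IsHomogeneous ℳ := by
  intro j m hm
  obtain ⟨m', rfl⟩ := Submodule.mem_span_singleton_smul_top.mp hm
  rw [decompose_smul_of_mem hsmul hx]
  exact Submodule.mem_span_singleton_smul_top.mpr ⟨_, rfl⟩

/-- The condition on `j` reads `j ≥ N + (n - 1) b`. Write `m = x m'`; then also `m = x m'_{j-b}`,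
and induct on `m'_{j-b}`. -/
theorem mem_span_singleton_pow_smul_top_of_mem [Decomposition ℳ] [IsScalarTower k S M]
    {b : ℕ} {x : S} (hx : x ∈ 𝒜 b) {N : ℤ}
    (hN : ∀ j, N ≤ j → ℳ j ≤ (Ideal.span {x} • (⊤ : Submodule S M)).restrictScalars k)
    (n : ℕ) {j : ℤ} (hj : N + n * b ≤ j + b) {m : M} (hm : m ∈ ℳ j) :
    m ∈ Ideal.span {x} ^ n • (⊤ : Submodule S M) := by
  induction n generalizing j m with
  | zero => simp
  | succ n ih =>
    obtain ⟨m', rfl⟩ :=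
      Submodule.mem_span_singleton_smul_top.mp (hN j (by push_cast at hj; nlinarith) hm)
    have hm' : x • m' = x • (decompose ℳ m' (j - b) : M) := by
      rw [← decompose_smul_of_mem hsmul hx, decompose_of_mem_same ℳ hm]
    obtain ⟨m'', hm''⟩ := Submodule.mem_span_singleton_pow_smul_top.mp
      (ih (j := j - b) (by push_cast at hj; linarith) (decompose ℳ m' (j - b)).2)
    exact Submodule.mem_span_singleton_pow_smul_top.mpr
      ⟨m'', by rw [hm', ← hm'', pow_succ', mul_smul]⟩

theorem irrelevantIdeal_smul_spanOfDegreeGE_le {b : ℕ}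
    (hgap : ∀ i : ℕ, 0 < i → i < b → 𝒜 i = ⊥) (e : ℤ) :
    irrelevantIdeal 𝒜 • spanOfDegreeGE S ℳ e ≤ spanOfDegreeGE S ℳ (e + b) := by
  rw [irrelevantIdeal, spanOfDegreeGE, Submodule.span_smul_span, Submodule.span_le]
  rintro _ ⟨s, ⟨i, hi, hs⟩, m, ⟨j, hj, hm⟩, rfl⟩
  rcases lt_or_ge i b with hib | hbi
  · rw [hgap i hi hib, Submodule.mem_bot] at hs
    simp [hs]
  · exact Submodule.subset_span ⟨i + j, by omega, hsmul i j s m hs hm⟩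

theorem irrelevantIdeal_pow_smul_top_le_spanOfDegreeGE {b : ℕ}
    (hgap : ∀ i : ℕ, 0 < i → i < b → 𝒜 i = ⊥) {d : ℤ} (hd : spanOfDegreeGE S ℳ d = ⊤)
    (n : ℕ) : irrelevantIdeal 𝒜 ^ n • (⊤ : Submodule S M) ≤ spanOfDegreeGE S ℳ (d + n * b) := by
  induction n with
  | zero => simp [hd]
  | succ n ih =>
    rw [pow_succ', Submodule.mul_smul]
    refine (smul_mono_right _ ih).trans ?_
    refine (irrelevantIdeal_smul_spanOfDegreeGE_le hsmul hgap _).trans_eq ?_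
    push_cast
    ring_nf

end GradedModule

theorem Submodule.IsHomogeneous.finite_setOf_not_le {K S M ι : Type*} [Field K] [CommRing S]
    [AddCommGroup M] [Module S M] [Module K M] [SMul K S] [IsScalarTower K S M] [DecidableEq ι]
    {ℳ : ι → Submodule K M} [Decomposition ℳ] {p : Submodule S M} [FiniteDimensional K (M ⧸ p)]
    (hp : p.IsHomogeneous ℳ) : {i | ¬ ℳ i ≤ p.restrictScalars K}.Finite := by
  convert WellFoundedGT.finite_ne_bot_of_iSupIndep hp.iSupIndep_map_mkQ using 3 with i
  rw [ne_eq, ← LinearMap.le_ker_iff_map, LinearMap.ker_restrictScalars, Submodule.ker_mkQ]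

theorem exists_irrelevantIdeal_pow_smul_top_le {K S M : Type*} [Field K] [CommRing S]
    [Module K S] [AddCommGroup M] [Module S M] [Module K M] [IsScalarTower K S M]
    [Module.Finite S M] {𝒜 : ℕ → Submodule K S} {ℳ : ℤ → Submodule K M} [Decomposition ℳ]
    (hsmul : ∀ (i : ℕ) (j : ℤ) (s : S) (m : M), s ∈ 𝒜 i → m ∈ ℳ j → s • m ∈ ℳ (i + j))
    {b : ℕ} (hb : 1 ≤ b) {x : S} (hx : x ∈ 𝒜 b) (hgap : ∀ i : ℕ, 0 < i → i < b → 𝒜 i = ⊥)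
    [FiniteDimensional K (M ⧸ Ideal.span {x} • (⊤ : Submodule S M))] :
    ∃ c : ℕ, ∀ n : ℕ, irrelevantIdeal 𝒜 ^ n • (⊤ : Submodule S M) ≤
      Ideal.span {x} ^ (n - c) • (⊤ : Submodule S M) := by
  obtain ⟨d, hd⟩ := exists_spanOfDegreeGE_eq_top (S := S) (ℳ := ℳ)
  obtain ⟨N, hN⟩ := (Submodule.IsHomogeneous.finite_setOf_not_le
    (isHomogeneous_span_singleton_smul_top hsmul hx)).bddAbove
  have hN' : ∀ j, N + 1 ≤ j → ℳ j ≤ (Ideal.span {x} • (⊤ : Submodule S M)).restrictScalars K :=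
    fun j hj ↦ by_contra fun h ↦ by linarith [hN h]
  set c := (N + 1 - d).toNat
  refine ⟨c, fun n ↦ ?_⟩
  rcases le_or_gt n c with hnc | hcn
  · simp [Nat.sub_eq_zero_of_le hnc]
  refine (irrelevantIdeal_pow_smul_top_le_spanOfDegreeGE hsmul hgap hd n).trans
    (Submodule.span_le.mpr ?_)
  rintro m ⟨j, hj, hm⟩
  refine mem_span_singleton_pow_smul_top_of_mem hsmul hx hN' (n - c) ?_ hm
  have hc : N + 1 - d ≤ c := Int.self_le_toNat _
  have hcb : (c : ℤ) ≤ c * b := le_mul_of_one_le_right (by positivity) (by exact_mod_cast hb)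
  push_cast [Nat.cast_sub hcn.le]
  nlinarith

theorem stmt_3_general
    (k S : Type) [Field k] [CommRing S] [Algebra k S]
    (𝒜 : ℕ → Submodule k S)
    (M : Type) [AddCommGroup M] [Module S M] [Module k M] [IsScalarTower k S M]
    [Module.Finite S M]
    (ℳ : ℤ → Submodule k M) [DirectSum.Decomposition ℳ]
    (hsmul : ∀ (i : ℕ) (j : ℤ) (s : S) (m : M), s ∈ 𝒜 i → m ∈ ℳ j → s • m ∈ ℳ (i + j))
    (b : ℕ) (hb : 1 ≤ b) (x : S) (hx : x ∈ 𝒜 b)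
    (hgap : ∀ i : ℕ, 0 < i → i < b → 𝒜 i = ⊥)
    (hreg : ∀ m : M, x • m = 0 → m = 0)
    (mS : Ideal S) (hmS : mS = Ideal.span {s : S | ∃ i : ℕ, 0 < i ∧ s ∈ 𝒜 i})
    [FiniteDimensional k (M ⧸ (Ideal.span {x} • (⊤ : Submodule S M)))] :
    Tendsto
      (fun n : ℕ => (Module.finrank k (M ⧸ (mS ^ n • (⊤ : Submodule S M))) : ℝ) / n)
      atTop
      (nhds (Module.finrank k (M ⧸ (Ideal.span {x} • (⊤ : Submodule S M))))) := by
  change mS = irrelevantIdeal 𝒜 at hmS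
  subst hmS
  set e := finrank k (M ⧸ Ideal.span {x} • (⊤ : Submodule S M))
  obtain ⟨c, hc⟩ := exists_irrelevantIdeal_pow_smul_top_le hsmul hb hx hgap
  have hxmS : Ideal.span {x} ≤ irrelevantIdeal 𝒜 :=
    Ideal.span_mono (Set.singleton_subset_iff.mpr ⟨b, hb, hx⟩)
  have hlen (n : ℕ) : length k (M ⧸ Ideal.span {x} ^ n • (⊤ : Submodule S M)) = (n * e : ℕ) := by
    rw [(IsSMulRegular.of_right_eq_zero_of_smul hreg).length_quotient_span_singleton_pow_smul_top k,
      length_eq_finrank, Nat.cast_mul]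
  have hup (n : ℕ) : length k (M ⧸ irrelevantIdeal 𝒜 ^ n • (⊤ : Submodule S M)) ≤ (n * e : ℕ) :=
    (Submodule.length_quotient_le_of_le k
      (Submodule.smul_mono_left (Ideal.pow_right_mono hxmS n))).trans_eq (hlen n)
  have hlow (n : ℕ) :
      ((n - c) * e : ℕ) ≤ length k (M ⧸ irrelevantIdeal 𝒜 ^ n • (⊤ : Submodule S M)) :=
    (hlen (n - c)).symm.trans_le (Submodule.length_quotient_le_of_le k (hc n))
  simp_rw [finrank_eq_toNat_length]
  refine tendsto_div_of_sub_mul_le_of_le_mul (c := c) (fun n ↦ ?_) (fun n ↦ ?_)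
  · exact (ENat.toNat_natCast _).symm.trans_le
      (ENat.toNat_le_toNat (hlow n) (ne_top_of_le_ne_top (ENat.natCast_ne_top _) (hup n)))
  · exact (ENat.toNat_le_toNat (hup n) (ENat.natCast_ne_top _)).trans_eq (ENat.toNat_natCast _)

/-- Let `S = ⊕_{n≥0} Sₙ` be a commutative graded ring with `S₀ = k` a field, and `M` a
finitely generated Cohen–Macaulay graded `S`-module of Krull dimension `1` (encoded as:
`M ≠ 0`, `x` is `M`-regular, and `M/xM` has finite length, i.e. finite `k`-dimension).
Suppose `x ∈ S_b` is an `M`-regular element and `Sᵢ = 0` for `0 < i < b`. Then the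
multiplicity of `M` with respect to the irrelevant maximal ideal `m_S` equals
`dim_k M/xM`:  `e₀(M) = lim_n length(M/m_Sⁿ M)/n = dim_k (M/xM)`. -/
theorem stmt_3
    (k S : Type) [Field k] [CommRing S] [Algebra k S]
    (𝒜 : ℕ → Submodule k S) [GradedAlgebra 𝒜]
    (h𝒜0 : 𝒜 0 = Submodule.span k {(1 : S)})
    (M : Type) [AddCommGroup M] [Module S M] [Module k M] [IsScalarTower k S M]
    [Module.Finite S M] [Nontrivial M]
    (ℳ : ℤ → Submodule k M) [DirectSum.Decomposition ℳ]
    (hsmul : ∀ (i : ℕ) (j : ℤ) (s : S) (m : M), s ∈ 𝒜 i → m ∈ ℳ j → s • m ∈ ℳ (i + j))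
    (b : ℕ) (hb : 1 ≤ b) (x : S) (hx : x ∈ 𝒜 b)
    (hgap : ∀ i : ℕ, 0 < i → i < b → 𝒜 i = ⊥)
    (hreg : ∀ m : M, x • m = 0 → m = 0)
    (mS : Ideal S) (hmS : mS = Ideal.span {s : S | ∃ i : ℕ, 0 < i ∧ s ∈ 𝒜 i})
    [FiniteDimensional k (M ⧸ (Ideal.span {x} • (⊤ : Submodule S M)))]
    (hfd : ∀ n : ℕ, FiniteDimensional k (M ⧸ (mS ^ n • (⊤ : Submodule S M)))) :
    Tendsto
      (fun n : ℕ => (Module.finrank k (M ⧸ (mS ^ n • (⊤ : Submodule S M))) : ℝ) / n)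
      atTop
      (nhds (Module.finrank k (M ⧸ (Ideal.span {x} • (⊤ : Submodule S M))))) :=
  stmt_3_general k S 𝒜 M ℳ hsmul b hb x hx hgap hreg mS hmS
end

section
/- Let C be a hyperelliptic smooth projective curve of genus g ≥ 2 over an algebraically closed field of characteristic ≠ 2, P ∈ C a point, and D = K_C + P. Then the cokernel of the multiplication map γ_1 : H^0(O_C(K_C)) ⊗ H^0(O_C(D)) → H^0(O_C(K_C + D)) has dimension g − 1. -/
/-- The degree of a divisor (a finitely supported `ℤ`-valued function on points). -/
noncomputable def divDeg {Pt : Type} (D : Pt →₀ ℤ) : ℤ := D.sum fun _ n => n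

/-- An abstract smooth projective curve over a field `k`, given by its function field `F`,
its set of closed points, a canonical divisor `K`, and the Riemann–Roch spaces
`RR D = H^0(O_C(D)) = {f ∈ F | div f + D ≥ 0} ∪ {0}` inside `F`, subject to the standard
facts of the theory of curves (finite-dimensionality, monotonicity, multiplicativity,
`H^0(O_C) = k`, vanishing in negative degrees, the Riemann–Roch theorem and
`deg K = 2g − 2`). -/
structure SmoothProjCurve (k F : Type) [Field k] [Field F] [Algebra k F] where
  Pt : Type
  genus : ℕ
  K : Pt →₀ ℤ
  RR : (Pt →₀ ℤ) → Submodule k F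
  h0 : (Pt →₀ ℤ) → ℕ
  h0_eq : ∀ D, h0 D = Module.finrank k (RR D)
  fin : ∀ D, FiniteDimensional k (RR D)
  mono : ∀ {D E : Pt →₀ ℤ}, D ≤ E → RR D ≤ RR E
  mul_le : ∀ D E : Pt →₀ ℤ, RR D * RR E ≤ RR (D + E)
  RR_zero : RR 0 = Submodule.span k {(1 : F)}
  inf_eq : ∀ D E : Pt →₀ ℤ, RR D ⊓ RR E = RR (D ⊓ E)
  h0_neg : ∀ D : Pt →₀ ℤ, divDeg D < 0 → h0 D = 0
  h0_degzero : ∀ D : Pt →₀ ℤ, divDeg D = 0 → h0 D ≤ 1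
  riemann_roch : ∀ D : Pt →₀ ℤ, (h0 D : ℤ) - h0 (K - D) = divDeg D + 1 - genus
  deg_K : divDeg K = 2 * (genus : ℤ) - 2

/-- `C` is hyperelliptic iff it carries a `g^1_2`, i.e. a divisor of degree `2` with
`h^0 ≥ 2` (equivalently, a degree-two map to `P^1`). -/
def SmoothProjCurve.Hyperelliptic {k F : Type} [Field k] [Field F] [Algebra k F]
    (C : SmoothProjCurve k F) : Prop :=
  ∃ D : C.Pt →₀ ℤ, divDeg D = 2 ∧ 2 ≤ C.h0 D

/-!
A `g¹₂` gives two sections `y₀, y₁` of a degree-two divisor `D₂` with `x = y₁ / y₀`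
transcendental, and `y₀ⁿ xʲ` (`j ≤ n`) are `n + 1` independent sections of `n D₂`. Riemann–Roch
then yields `0 ≠ u ∈ H⁰(K − (g − 1) D₂)`, so `H⁰(K) = c · ⟨1, x, …, x^{g−1}⟩` with
`c = y₀^{g−1} u`, and `H⁰(K) · H⁰(K) = c² · ⟨1, x, …, x^{2g−2}⟩` has dimension `2g − 1`.
Finally `H⁰(K + P) = H⁰(K)` and `h⁰(2K + P) = 3g − 2`, again by Riemann–Roch.
-/

open scoped Pointwise

section
variable {Pt : Type}

lemma divDeg_eq_liftAddHom (D : Pt →₀ ℤ) :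
    divDeg D = Finsupp.liftAddHom (fun _ => AddMonoidHom.id ℤ) D := by
  rw [Finsupp.liftAddHom_apply]; rfl

lemma divDeg_add (D E : Pt →₀ ℤ) : divDeg (D + E) = divDeg D + divDeg E := by
  simp only [divDeg_eq_liftAddHom, map_add]

lemma divDeg_sub (D E : Pt →₀ ℤ) : divDeg (D - E) = divDeg D - divDeg E := by
  simp only [divDeg_eq_liftAddHom, map_sub]

lemma divDeg_nsmul (n : ℕ) (D : Pt →₀ ℤ) : divDeg (n • D) = n * divDeg D := by
  simp only [divDeg_eq_liftAddHom, map_nsmul, nsmul_eq_mul]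

lemma divDeg_single (P : Pt) (n : ℤ) : divDeg (Finsupp.single P n) = n := by
  simp [divDeg_eq_liftAddHom]
end

section
variable {k F : Type} [Field k] [Field F] [Algebra k F]

lemma Transcendental.linearIndependent_mul_pow {x : F} (hx : Transcendental k x) {c : F}
    (hc : c ≠ 0) : LinearIndependent k fun i : ℕ => c * x ^ i := by
  have hpow : LinearIndependent k fun i : ℕ => x ^ i := by
    simpa [Function.comp_def, Polynomial.coe_basisMonomials] using
      (Polynomial.basisMonomials k).linearIndependent.map'
        (Polynomial.aeval x).toLinearMap
        (LinearMap.ker_eq_bot.2 (transcendental_iff_injective.1 hx))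
  exact hpow.map' (LinearMap.mulLeft k c) (LinearMap.ker_eq_bot.2 (mul_right_injective₀ hc))

lemma Transcendental.finrank_span_mul_pow {x : F} (hx : Transcendental k x) {c : F}
    (hc : c ≠ 0) (n : ℕ) :
    Module.finrank k (Submodule.span k (Set.range fun i : Fin n => c * x ^ (i : ℕ))) = n :=
  (finrank_span_eq_card ((hx.linearIndependent_mul_pow hc).comp Fin.val
    Fin.val_injective)).trans (Fintype.card_fin n)

lemma mem_range_algebraMap_of_not_transcendental [IsAlgClosed k] {x : F}
    (hx : ¬Transcendental k x) : x ∈ (algebraMap k F).range := by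
  have hint : IsIntegral k x := (not_not.1 hx).isIntegral
  exact minpoly.mem_range_of_degree_eq_one k x
    (IsAlgClosed.degree_eq_one_of_irreducible k (minpoly.irreducible hint))

lemma Submodule.exists_transcendental_div_of_one_lt_finrank [IsAlgClosed k]
    {V : Submodule k F} (hV : 1 < Module.finrank k V) :
    ∃ y ∈ V, ∃ z ∈ V, y ≠ 0 ∧ Transcendental k (z / y) := by
  obtain ⟨y, hyV, hy⟩ := V.exists_mem_ne_zero_of_ne_bot
    (fun h => by rw [h, finrank_bot] at hV; omega)
  refine ⟨y, hyV, ?_⟩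
  by_contra! h
  have hle : V ≤ Submodule.span k {y} := fun z hz => by
    obtain ⟨c, hc⟩ := mem_range_algebraMap_of_not_transcendental (h z hz hy)
    rw [Submodule.mem_span_singleton]
    exact ⟨c, by rw [Algebra.smul_def, hc, div_mul_cancel₀ z hy]⟩
  have := Submodule.finrank_mono hle
  rw [finrank_span_singleton hy] at this
  omega

lemma range_mul_pow_mul_self (c x : F) (n : ℕ) :
    (Set.range fun i : Fin n => c * x ^ (i : ℕ)) * (Set.range fun i : Fin n => c * x ^ (i : ℕ)) =
      Set.range fun l : Fin (2 * n - 1) => c ^ 2 * x ^ (l : ℕ) := by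
  ext z
  simp only [Set.mem_mul, Set.mem_range]
  constructor
  · rintro ⟨_, ⟨i, rfl⟩, _, ⟨j, rfl⟩, rfl⟩
    exact ⟨⟨i + j, by omega⟩, by rw [pow_add]; ring⟩
  · rintro ⟨l, rfl⟩
    refine ⟨_, ⟨⟨min (l : ℕ) (n - 1), by omega⟩, rfl⟩,
      _, ⟨⟨l - min (l : ℕ) (n - 1), by omega⟩, rfl⟩, ?_⟩
    rw [mul_mul_mul_comm, ← pow_add, sq]
    congr 2
    simp only
    omega
end

namespace SmoothProjCurve

variable {k F : Type} [Field k] [Field F] [Algebra k F] (C : SmoothProjCurve k F)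

lemma h0_zero : C.h0 0 = 1 := by
  rw [C.h0_eq, C.RR_zero, finrank_span_singleton one_ne_zero]

lemma h0_K : C.h0 C.K = C.genus := by
  have h := C.riemann_roch C.K
  rw [sub_self, h0_zero, C.deg_K] at h
  omega

lemma h0_eq_of_divDeg_K_lt {D : C.Pt →₀ ℤ} (hD : divDeg C.K < divDeg D) :
    (C.h0 D : ℤ) = divDeg D + 1 - C.genus := by
  have h := C.riemann_roch D
  rw [C.h0_neg (C.K - D) (by rw [divDeg_sub]; omega)] at h
  push_cast at h
  linarith

lemma RR_eq_of_le_of_h0_le {D E : C.Pt →₀ ℤ} (hDE : D ≤ E) (h : C.h0 E ≤ C.h0 D) :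
    C.RR D = C.RR E := by
  have := C.fin E
  refine Submodule.eq_of_le_of_finrank_le (C.mono hDE) ?_
  rwa [← C.h0_eq, ← C.h0_eq]

lemma exists_mem_RR_ne_zero {D : C.Pt →₀ ℤ} (hD : 0 < C.h0 D) : ∃ u ∈ C.RR D, u ≠ 0 :=
  Submodule.exists_mem_ne_zero_of_ne_bot fun h => by rw [C.h0_eq, h, finrank_bot] at hD; omega

lemma pow_mem_RR_nsmul {D : C.Pt →₀ ℤ} {y : F} (hy : y ∈ C.RR D) (n : ℕ) :
    y ^ n ∈ C.RR (n • D) := by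
  induction n with
  | zero =>
    rw [pow_zero, zero_smul, C.RR_zero]
    exact Submodule.mem_span_singleton_self 1
  | succ n ih => rw [pow_succ, succ_nsmul]; exact C.mul_le _ _ (Submodule.mul_mem_mul ih hy)

lemma pow_mul_pow_mem_RR_nsmul {D : C.Pt →₀ ℤ} {y z : F} (hy : y ∈ C.RR D) (hz : z ∈ C.RR D)
    (a b : ℕ) : y ^ a * z ^ b ∈ C.RR ((a + b) • D) := by
  rw [add_nsmul]
  exact C.mul_le _ _ (Submodule.mul_mem_mul (C.pow_mem_RR_nsmul hy a) (C.pow_mem_RR_nsmul hz b))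

lemma mul_div_pow_mem_RR_nsmul {D : C.Pt →₀ ℤ} {y z : F} (hy : y ∈ C.RR D) (hz : z ∈ C.RR D)
    (hy0 : y ≠ 0) {n j : ℕ} (hj : j ≤ n) : y ^ n * (z / y) ^ j ∈ C.RR (n • D) := by
  have h := C.pow_mul_pow_mem_RR_nsmul hy hz (n - j) j
  have e : y ^ n * (z / y) ^ j = y ^ (n - j) * z ^ j := by
    rw [← pow_sub_mul_pow y hj, div_pow]
    field_simp
  rw [e]
  rwa [Nat.sub_add_cancel hj] at h

lemma RR_K_add_single (P : C.Pt) : C.RR (C.K + Finsupp.single P 1) = C.RR C.K := by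
  refine (C.RR_eq_of_le_of_h0_le (le_add_of_nonneg_right (Finsupp.single_nonneg.2 zero_le_one))
    ?_).symm
  have h := C.h0_eq_of_divDeg_K_lt (D := C.K + Finsupp.single P 1)
    (by rw [divDeg_add, divDeg_single]; omega)
  rw [divDeg_add, divDeg_single, C.deg_K] at h
  rw [C.h0_K]
  omega

lemma succ_le_h0_nsmul {D : C.Pt →₀ ℤ} {y z : F} (hy : y ∈ C.RR D) (hz : z ∈ C.RR D)
    (hy0 : y ≠ 0) (hx : Transcendental k (z / y)) (n : ℕ) : n + 1 ≤ C.h0 (n • D) := by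
  have := C.fin (n • D)
  have hle : Submodule.span k (Set.range fun j : Fin (n + 1) => y ^ n * (z / y) ^ (j : ℕ)) ≤
      C.RR (n • D) :=
    Submodule.span_le.2 <| Set.range_subset_iff.2 fun j =>
      C.mul_div_pow_mem_RR_nsmul hy hz hy0 (Nat.lt_succ_iff.1 j.isLt)
  simpa [C.h0_eq, hx.finrank_span_mul_pow (pow_ne_zero n hy0)] using Submodule.finrank_mono hle

lemma exists_RR_K_eq_span_mul_pow [IsAlgClosed k] (hC : C.Hyperelliptic) (hg : 1 ≤ C.genus) :
    ∃ c x : F, c ≠ 0 ∧ Transcendental k x ∧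
      C.RR C.K = Submodule.span k (Set.range fun i : Fin C.genus => c * x ^ (i : ℕ)) := by
  obtain ⟨D, hDdeg, hD⟩ := hC
  obtain ⟨y, hy, z, hz, hy0, hx⟩ :=
    Submodule.exists_transcendental_div_of_one_lt_finrank (V := C.RR D) (by rw [← C.h0_eq]; omega)
  obtain ⟨n, hn⟩ : ∃ n, C.genus = n + 1 := ⟨C.genus - 1, by omega⟩
  have hRR := C.riemann_roch (n • D)
  rw [divDeg_nsmul, hDdeg, hn] at hRR
  have hnD := C.succ_le_h0_nsmul hy hz hy0 hx n
  obtain ⟨u, hu, hu0⟩ := C.exists_mem_RR_ne_zero (D := C.K - n • D) (by push_cast at hRR; omega)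
  refine ⟨y ^ n * u, z / y, mul_ne_zero (pow_ne_zero n hy0) hu0, hx, ?_⟩
  have hmem (i : Fin C.genus) : y ^ n * u * (z / y) ^ (i : ℕ) ∈ C.RR C.K := by
    have h := C.mul_le _ _ (Submodule.mul_mem_mul
      (C.mul_div_pow_mem_RR_nsmul hy hz hy0 (n := n) (j := i) (by have := i.isLt; omega)) hu)
    rwa [add_sub_cancel, mul_right_comm] at h
  have := C.fin C.K
  refine (Submodule.eq_of_le_of_finrank_le (Submodule.span_le.2 (Set.range_subset_iff.2 hmem))
    ?_).symm
  rw [hx.finrank_span_mul_pow (mul_ne_zero (pow_ne_zero n hy0) hu0), ← C.h0_eq, C.h0_K]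

end SmoothProjCurve

theorem stmt_7_general (k F : Type) [Field k] [IsAlgClosed k] [Field F] [Algebra k F]
    (C : SmoothProjCurve k F) (hg : 2 ≤ C.genus) (hhyp : C.Hyperelliptic) (P : C.Pt) :
    C.h0 (C.K + (C.K + Finsupp.single P 1)) =
      Module.finrank k ↥(C.RR C.K * C.RR (C.K + Finsupp.single P 1)) + (C.genus - 1) := by
  obtain ⟨c, x, hc, hx, hK⟩ := C.exists_RR_K_eq_span_mul_pow hhyp (by omega)
  have hprod : Module.finrank k ↥(C.RR C.K * C.RR C.K) = 2 * C.genus - 1 := by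
    rw [hK, Submodule.span_mul_span, range_mul_pow_mul_self,
      hx.finrank_span_mul_pow (pow_ne_zero 2 hc)]
  have h2KP := C.h0_eq_of_divDeg_K_lt (D := C.K + (C.K + Finsupp.single P 1))
    (by simp only [divDeg_add, divDeg_single, C.deg_K]; omega)
  simp only [divDeg_add, divDeg_single, C.deg_K] at h2KP
  rw [C.RR_K_add_single, hprod]
  omega

/-- Let `C` be a hyperelliptic smooth projective curve of genus `g ≥ 2` over an algebraically
closed field of characteristic `≠ 2`, `P ∈ C` a point and `D = K_C + P`. Then the cokernel of
the multiplication map `γ₁ : H^0(O_C(K_C)) ⊗ H^0(O_C(D)) → H^0(O_C(K_C + D))` has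
dimension `g − 1`; i.e. `h^0(K_C + D) = dim (RR K_C · RR D) + (g − 1)`. -/
theorem stmt_7 (k F : Type) [Field k] [IsAlgClosed k] [Field F] [Algebra k F]
    (hch : ringChar k ≠ 2)
    (C : SmoothProjCurve k F) (hg : 2 ≤ C.genus) (hhyp : C.Hyperelliptic) (P : C.Pt) :
    C.h0 (C.K + (C.K + Finsupp.single P 1)) =
      Module.finrank k ↥(C.RR C.K * C.RR (C.K + Finsupp.single P 1)) + (C.genus - 1) :=
  stmt_7_general k F C hg hhyp P
end

section
/- Let H be a numerical semigroup with multiplicity e = min(H \ {0}) and genus g = #(ℕ \ H). If e < g + 1 and H has maximal embedding dimension (embedding dimension equal to e), then H has a minimal generator n with n > 2e. Contrapositive form: if every minimal generator of a maximal-embedding-dimension numerical semigroup H lies in the interval [e, 2e], then g ≤ e − 1, and in that case H = {0, g+1, g+2, …}. -/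
/-- The multiplicity `e(H)`: the least positive element of `H`. -/
noncomputable def NS.mult (H : Set ℕ) : ℕ := sInf {n : ℕ | n ∈ H ∧ 0 < n}

/-- The set of minimal generators of `H`: positive elements of `H` which are not sums of two
positive elements of `H`. -/
def NS.minGens (H : Set ℕ) : Set ℕ :=
  {n : ℕ | n ∈ H ∧ 0 < n ∧ ¬ ∃ a ∈ H, ∃ b ∈ H, 0 < a ∧ 0 < b ∧ n = a + b}

/-- The embedding dimension of `H`: the number of minimal generators. -/
noncomputable def NS.embdim (H : Set ℕ) : ℕ := (NS.minGens H).ncard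

/-! Under maximal embedding dimension the `e` minimal generators are pairwise incongruent
modulo `e` (the difference of two congruent ones would be a positive multiple of `e`), so they
meet every residue class. If they all lie in `[e, 2e]`, this puts `[e, 2e)` inside `H`, hence
every `n ≥ e` is in `H`, and `H = {0, e, e+1, …}` has genus `e - 1`. -/

open Set

theorem Nat.mod_eq_sub_of_le_of_lt_two_mul {a m : ℕ} (h₁ : m ≤ a) (h₂ : a < 2 * m) :
    a % m = a - m := by
  rw [Nat.mod_eq_sub_mod h₁, Nat.mod_eq_of_lt (by omega)]

variable {H : Set ℕ}

theorem NS.mult_le_of_mem {n : ℕ} (hn : n ∈ H) (hpos : 0 < n) : NS.mult H ≤ n :=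
  Nat.sInf_le ⟨hn, hpos⟩

theorem NS.gaps_insert_zero_setOf_le (e : ℕ) : NS.gaps (insert 0 {n | e ≤ n}) = e - 1 := by
  have hcompl : (insert 0 {n : ℕ | e ≤ n})ᶜ = Ioo 0 e := by
    ext n
    simp only [mem_compl_iff, mem_insert_iff, mem_ofPred_eq, mem_Ioo]
    omega
  rw [NS.gaps, hcompl, Set.ncard_Ioo_nat]
  omega

namespace IsNumericalSemigroup

theorem mul_mem (hH : IsNumericalSemigroup H) {a : ℕ} (ha : a ∈ H) (k : ℕ) : k * a ∈ H := by
  induction k with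
  | zero => simpa using hH.1
  | succ k ih => simpa [Nat.succ_mul] using hH.2.1 _ ih _ ha

theorem exists_pos_mem (hH : IsNumericalSemigroup H) : ∃ n ∈ H, 0 < n := by
  have hinf : H.Infinite := by simpa using hH.2.2.infinite_compl
  exact hinf.exists_gt 0

theorem mult_mem (hH : IsNumericalSemigroup H) : NS.mult H ∈ H :=
  (Nat.sInf_mem hH.exists_pos_mem).1

theorem mult_pos (hH : IsNumericalSemigroup H) : 0 < NS.mult H :=
  (Nat.sInf_mem hH.exists_pos_mem).2

theorem Ici_subset_of_Ico_subset (hH : IsNumericalSemigroup H) {m : ℕ} (hm : m ∈ H)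
    (hm₀ : 0 < m) (hIco : Ico m (2 * m) ⊆ H) : Ici m ⊆ H := by
  intro n hn
  induction n using Nat.strong_induction_on with
  | _ n ih =>
    by_cases hn₂ : n < 2 * m
    · exact hIco ⟨hn, hn₂⟩
    · have hsub : n - m ∈ H := ih (n - m) (by omega) (by simp only [mem_Ici]; omega)
      simpa [Nat.sub_add_cancel (by omega : m ≤ n)] using hH.2.1 _ hsub _ hm

theorem injOn_mod_minGens (hH : IsNumericalSemigroup H) {m : ℕ} (hm : m ∈ H) :
    InjOn (· % m) (NS.minGens H) := by
  suffices hnot_lt : ∀ a ∈ NS.minGens H, ∀ b ∈ NS.minGens H, a % m = b % m → ¬ a < b by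
    intro a ha b hb hab
    by_contra hne
    rcases Nat.lt_or_gt_of_ne hne with h | h
    exacts [hnot_lt a ha b hb hab h, hnot_lt b hb a ha hab.symm h]
  intro a ha b hb hab hlt
  obtain ⟨k, hk⟩ := (Nat.modEq_iff_dvd' hlt.le).mp hab
  have hdiff : b - a ∈ H := by
    rw [hk, mul_comm]
    exact hH.mul_mem hm k
  exact hb.2.2 ⟨a, ha.1, b - a, hdiff, ha.2.1, by omega, by omega⟩

theorem image_mod_mult_minGens (hH : IsNumericalSemigroup H)
    (hmed : NS.embdim H = NS.mult H) :
    (· % NS.mult H) '' NS.minGens H = Iio (NS.mult H) := by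
  refine eq_of_subset_of_ncard_le ?_ ?_ (finite_Iio _)
  · rintro _ ⟨n, -, rfl⟩
    exact Nat.mod_lt _ hH.mult_pos
  · rw [(hH.injOn_mod_minGens hH.mult_mem).ncard_image, ← NS.embdim, hmed, Set.ncard_Iio_nat]

theorem eq_insert_zero_setOf_mult_le (hH : IsNumericalSemigroup H)
    (hmed : NS.embdim H = NS.mult H) (hle : ∀ n ∈ NS.minGens H, n ≤ 2 * NS.mult H) :
    H = insert 0 {n | NS.mult H ≤ n} := by
  set e := NS.mult H with he
  have hIco : Ico e (2 * e) ⊆ H := by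
    rintro j ⟨hej, hj⟩
    obtain ⟨n, hn, hmod⟩ : j % e ∈ (· % e) '' NS.minGens H := by
      rw [he, hH.image_mod_mult_minGens hmed]
      exact Nat.mod_lt _ hH.mult_pos
    have hen : e ≤ n := NS.mult_le_of_mem hn.1 hn.2.1
    have hmod : n % e = j - e := hmod.trans (Nat.mod_eq_sub_of_le_of_lt_two_mul hej hj)
    rcases (hle n hn).eq_or_lt with hn₂ | hn₂
    · have hje : j = e := by
        rw [hn₂, Nat.mul_mod_left] at hmod
        omega
      exact hje ▸ hH.mult_mem
    · rw [Nat.mod_eq_sub_of_le_of_lt_two_mul hen hn₂] at hmod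
      exact (show n = j by omega) ▸ hn.1
  have hIci := hH.Ici_subset_of_Ico_subset hH.mult_mem hH.mult_pos hIco
  ext n
  simp only [mem_insert_iff, mem_ofPred_eq]
  refine ⟨fun hn => ?_, ?_⟩
  · rcases Nat.eq_zero_or_pos n with h | h
    exacts [Or.inl h, Or.inr (NS.mult_le_of_mem hn h)]
  · rintro (rfl | h)
    exacts [hH.1, hIci h]

end IsNumericalSemigroup

/-- Let `H` be a numerical semigroup of maximal embedding dimension (`embdim H = e`),
with multiplicity `e` and genus `g`. If `e < g + 1` then `H` has a minimal generator `n > 2e`.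
Contrapositive form: if every minimal generator lies in `[e, 2e]`, then `g ≤ e − 1`, and in
that case `H = {0, g+1, g+2, …}`. -/
theorem stmt_19 (H : Set ℕ) (hH : IsNumericalSemigroup H)
    (hmed : NS.embdim H = NS.mult H) :
    (NS.mult H < NS.gaps H + 1 → ∃ n ∈ NS.minGens H, 2 * NS.mult H < n) ∧
    ((∀ n ∈ NS.minGens H, NS.mult H ≤ n ∧ n ≤ 2 * NS.mult H) →
      NS.gaps H ≤ NS.mult H - 1 ∧ H = insert 0 {n : ℕ | NS.gaps H + 1 ≤ n}) := by
  have hcontra : (∀ n ∈ NS.minGens H, n ≤ 2 * NS.mult H) →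
      NS.gaps H = NS.mult H - 1 ∧ H = insert 0 {n | NS.mult H ≤ n} := fun hle =>
    have hHeq := hH.eq_insert_zero_setOf_mult_le hmed hle
    ⟨(congrArg NS.gaps hHeq).trans (NS.gaps_insert_zero_setOf_le _), hHeq⟩
  have he := hH.mult_pos
  refine ⟨fun hlt => ?_, fun hbound => ?_⟩
  · by_contra! hle
    have := (hcontra hle).1
    omega
  · obtain ⟨hg, hHeq⟩ := hcontra fun n hn => (hbound n hn).2
    rw [show NS.gaps H + 1 = NS.mult H by omega]
    exact ⟨by omega, hHeq⟩
end
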